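/- arXiv:math/0703822 — 6 statements merged into one kernel-verified Lean document; each statement's English description precedes it below -/
import Mathlib

section
/- Let n ≥ 2 be an integer and let (α_i^μ), indexed by pairs of integers with 1 ≤ μ ≤ i ≤ n−1, be a family of real numbers that is algebraically independent over ℚ. For each i = 1, …, n−1 define a_i ∈ ℝ^{n−1} to be the vector whose μ-th coordinate equals α_i^μ for μ ≤ i and equals 0 for μ > i. Then the convex hull of {a_1, …, a_{n−1}} in ℝ^{n−1} contains no rational point, i.e. no point all of whose coordinates lie in ℚ. -/
/-!
Write a point of the affine span as `x = ∑ wᵢ aᵢ` with `∑ wᵢ = 1`. By Cramer's rule, `∑ wᵢ = 1`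
becomes `∑ᵢ det (M with row i replaced by x) = det M` for the lower triangular matrix `M = (aᵢ^μ)`.
If `x` is rational, replacing the `αᵢ^μ` by indeterminates turns this into a polynomial relation
over `ℚ` satisfied by `α`. It is nontrivial: `det M` becomes the product of the `n - 1` diagonal
variables, while every other determinant has a constant row and so has degree at most `n - 2`.
-/

open MvPolynomial Matrix Finset

theorem Matrix.sum_det_updateRow_vecMul {ι R : Type*} [Fintype ι] [DecidableEq ι] [CommRing R]
    (M : Matrix ι ι R) {w : ι → R} (hw : ∑ i, w i = 1) :
    ∑ i, (M.updateRow i (w ᵥ* M)).det = M.det := by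
  have hcramer : Mᵀ.cramer (w ᵥ* M) = M.det • w := by
    rw [← mulVec_transpose, cramer_eq_adjugate_mulVec, mulVec_mulVec, adjugate_mul, smul_mulVec,
      one_mulVec, det_transpose]
  simp_rw [← cramer_transpose_apply, hcramer, Pi.smul_apply, smul_eq_mul, ← mul_sum, hw, mul_one]

namespace MvPolynomial

variable {σ R : Type*}

theorem totalDegree_prod_X [CommSemiring R] [Nontrivial R] {κ : Type*} (s : Finset κ)
    (v : κ → σ) : (∏ i ∈ s, X (v i) : MvPolynomial σ R).totalDegree = #s := by
  simp_rw [X, ← monomial_sum_one, totalDegree_monomial _ one_ne_zero]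
  change Finsupp.degree _ = _
  simp [map_sum]

variable [CommRing R] {ι : Type*} [Fintype ι] [DecidableEq ι]

theorem totalDegree_det_le (M : Matrix ι ι (MvPolynomial σ R)) (d : ι → ℕ)
    (h : ∀ i j, (M i j).totalDegree ≤ d i) : M.det.totalDegree ≤ ∑ i, d i := by
  rw [det_apply']
  refine totalDegree_finsetSum_le fun τ _ => ?_
  calc _ ≤ (↑↑(Equiv.Perm.sign τ) : MvPolynomial σ R).totalDegree + (∏ i, M (τ i) i).totalDegree :=
        totalDegree_mul _ _
    _ ≤ 0 + ∑ i, d (τ i) := by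
        gcongr
        · rw [← map_intCast (C : R →+* MvPolynomial σ R), totalDegree_C]
        · exact (totalDegree_finsetProd _ _).trans (sum_le_sum fun i _ => h _ _)
    _ = ∑ i, d i := by rw [zero_add, Equiv.sum_comp]

theorem totalDegree_det_updateRow_C_le (M : Matrix ι ι (MvPolynomial σ R))
    (h : ∀ i j, (M i j).totalDegree ≤ 1) (i : ι) (c : ι → R) :
    (M.updateRow i (C ∘ c)).det.totalDegree ≤ Fintype.card ι - 1 := by
  refine (totalDegree_det_le _ (fun k => if k = i then 0 else 1) fun k j => ?_).trans ?_
  · rcases eq_or_ne k i with rfl | hk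
    · simp [totalDegree_C]
    · simpa [hk] using h k j
  · simp [sum_ite, filter_ne']

end MvPolynomial

section GenericLowerTriangular

variable (ι R : Type*) [LinearOrder ι] [CommRing R]

noncomputable def genericLowerTriangular : Matrix ι ι (MvPolynomial {p : ι × ι // p.2 ≤ p.1} R) :=
  of fun i j => if h : j ≤ i then X ⟨(i, j), h⟩ else 0

theorem genericLowerTriangular_isLowerTriangular :
    (genericLowerTriangular ι R).IsLowerTriangular := fun _ _ hij =>
  dif_neg (not_le.mpr hij)

theorem totalDegree_genericLowerTriangular_apply_le [Nontrivial R] (i j : ι) :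
    (genericLowerTriangular ι R i j).totalDegree ≤ 1 := by
  rw [genericLowerTriangular, of_apply]
  split_ifs <;> simp

variable [Fintype ι]

theorem det_genericLowerTriangular :
    (genericLowerTriangular ι R).det = ∏ i, X ⟨(i, i), le_rfl⟩ := by
  rw [det_of_isLowerTriangular _ (genericLowerTriangular_isLowerTriangular ι R)]
  simp [genericLowerTriangular]

variable [Nontrivial R]

theorem totalDegree_det_genericLowerTriangular :
    (genericLowerTriangular ι R).det.totalDegree = Fintype.card ι := by
  rw [det_genericLowerTriangular, totalDegree_prod_X, card_univ]

variable {ι R}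

theorem sum_ne_one_of_vecMul_map_genericLowerTriangular {A : Type*} [CommRing A]
    [Algebra R A] {α : {p : ι × ι // p.2 ≤ p.1} → A} (hα : AlgebraicIndependent R α)
    {w : ι → A} {q : ι → R}
    (hwq : w ᵥ* (genericLowerTriangular ι R).map (aeval α) = algebraMap R A ∘ q) :
    ∑ i, w i ≠ 1 := by
  intro hw
  have hrel : aeval α (∑ i, ((genericLowerTriangular ι R).updateRow i (C ∘ q)).det -
      (genericLowerTriangular ι R).det) = 0 := by
    have hq : aeval α ∘ C ∘ q = w ᵥ* (genericLowerTriangular ι R).map (aeval α) := by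
      rw [hwq]; ext; simp
    simp_rw [map_sub, map_sum, AlgHom.map_det, AlgHom.mapMatrix_apply, map_updateRow, hq,
      sum_det_updateRow_vecMul _ hw, sub_self]
  have hdet := (sub_eq_zero.mp (hα.eq_zero_of_aeval_eq_zero _ hrel)).symm
  -- comparing degrees leaves only `ι = ∅`, where the relation reads `1 = 0`
  have hcard : Fintype.card ι = 0 := by
    have := totalDegree_finsetSum_le (s := univ) fun i _ =>
      totalDegree_det_updateRow_C_le _ (totalDegree_genericLowerTriangular_apply_le ι R) i q
    rw [← hdet, totalDegree_det_genericLowerTriangular] at this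
    omega
  rw [Fintype.card_eq_zero_iff] at hcard
  simp [det_isEmpty] at hdet

end GenericLowerTriangular

theorem stmt0_general (n : ℕ)
    (α : {p : Fin (n - 1) × Fin (n - 1) // p.2 ≤ p.1} → ℝ)
    (hα : AlgebraicIndependent ℚ α)
    (a : Fin (n - 1) → Fin (n - 1) → ℝ)
    (ha : ∀ (i μ : Fin (n - 1)), a i μ = if h : μ ≤ i then α ⟨(i, μ), h⟩ else 0) :
    ∀ x ∈ convexHull ℝ (Set.range a), ¬ (∀ μ : Fin (n - 1), ∃ q : ℚ, x μ = (q : ℝ)) := by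
  intro x hx hrat
  choose q hq using hrat
  obtain ⟨w, hw, rfl⟩ :=
    eq_affineCombination_of_mem_affineSpan_of_fintype (convexHull_subset_affineSpan _ hx)
  have hmap : (genericLowerTriangular (Fin (n - 1)) ℚ).map (aeval α) = of a := by
    ext i μ
    rw [map_apply, of_apply, ha, genericLowerTriangular, of_apply]
    split_ifs <;> simp
  refine sum_ne_one_of_vecMul_map_genericLowerTriangular hα (q := q) ?_ hw
  rw [hmap]
  ext μ
  simp [vecMul, dotProduct, ← hq, affineCombination_eq_linear_combination _ _ _ hw]

/-- Perturbation lemma core: if the triangular family of coordinates `α` is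
algebraically independent over `ℚ`, then the convex hull of the points
`a_1, …, a_{n-1}` contains no rational point. -/
theorem stmt0 (n : ℕ) (hn : 2 ≤ n)
    (α : {p : Fin (n - 1) × Fin (n - 1) // p.2 ≤ p.1} → ℝ)
    (hα : AlgebraicIndependent ℚ α)
    (a : Fin (n - 1) → Fin (n - 1) → ℝ)
    (ha : ∀ (i μ : Fin (n - 1)), a i μ = if h : μ ≤ i then α ⟨(i, μ), h⟩ else 0) :
    ∀ x ∈ convexHull ℝ (Set.range a), ¬ (∀ μ : Fin (n - 1), ∃ q : ℚ, x μ = (q : ℝ)) :=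
  stmt0_general n α hα a ha
end

section
/- Let R be a commutative ring and D : R → R a derivation, i.e. an additive map satisfying D(xy) = x·D(y) + D(x)·y for all x, y ∈ R. For x ∈ R define the sequence g_n(x) ∈ R recursively by g_0(x) = 1 and g_{n+1}(x) = x·g_n(x) + D(g_n(x)). Then for all a, b ∈ R and all n ≥ 0, g_n(a + b) = Σ_{i=0}^{n} (n choose i) · g_i(a) · g_{n−i}(b). -/
/-!
Write `L_x y = x * y + D y`, so that `g_n(x) = L_x^n(1)`. The Leibniz rule for `D` becomes the
twisted rule `L_{a+b}(u v) = L_a(u) v + u L_b(v)`, and iterating a twisted Leibniz rule gives the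
binomial expansion `L_{a+b}^n(u v) = ∑ (n choose i) L_a^i(u) L_b^{n-i}(v)` exactly as for the
ordinary higher Leibniz rule; take `u = v = 1`.
-/

open Finset

section IterateLeibniz

variable {R : Type*} [CommSemiring R]

theorem iterate_map_mul_eq_sum_choose (S : R →+ R) (P Q : R → R)
    (hS : ∀ u v, S (u * v) = P u * v + u * Q v) (u v : R) (n : ℕ) :
    S^[n] (u * v) = ∑ i ∈ range (n + 1), (n.choose i : R) * (P^[i] u * Q^[n - i] v) := by
  induction n with
  | zero => simp
  | succ n ih =>
    have hshift : ∀ i ∈ range (n + 1), (n.choose i : R) * (P^[i] u * Q^[n - i + 1] v)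
        = (n.choose i : R) * (P^[i] u * Q^[n + 1 - i] v) := by
      intro i hi
      rw [Nat.sub_add_comm (Nat.lt_succ_iff.mp (mem_range.mp hi))]
    rw [Function.iterate_succ_apply', ih, map_sum,
      sum_choose_succ_mul (fun i j ↦ P^[i] u * Q^[j] v), ← sum_congr rfl hshift,
      ← sum_add_distrib]
    refine sum_congr rfl fun i _ ↦ ?_
    rw [← nsmul_eq_mul, map_nsmul, nsmul_eq_mul, hS, Function.iterate_succ_apply',
      Function.iterate_succ_apply']
    ring

theorem mulLeft_add_map_mul (D : R →+ R) (hD : ∀ x y, D (x * y) = x * D y + D x * y)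
    (a b u v : R) :
    (AddMonoidHom.mulLeft (a + b) + D) (u * v)
      = (AddMonoidHom.mulLeft a + D) u * v + u * (AddMonoidHom.mulLeft b + D) v := by
  simp only [AddMonoidHom.add_apply, AddMonoidHom.coe_mulLeft, hD]
  ring

end IterateLeibniz

/-- Higher-order Leibniz rule: for a derivation `D` on a commutative ring and
the sequence `g_n(x)` defined by `g_0(x) = 1`, `g_{n+1}(x) = x·g_n(x) + D(g_n(x))`,
one has `g_n(a+b) = ∑ᵢ (n choose i) g_i(a) g_{n-i}(b)`. -/
theorem stmt2 (R : Type*) [CommRing R] (D : R → R)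
    (hDadd : ∀ x y, D (x + y) = D x + D y)
    (hDmul : ∀ x y, D (x * y) = x * D y + D x * y)
    (g : ℕ → R → R)
    (hg0 : ∀ x, g 0 x = 1)
    (hgs : ∀ n x, g (n + 1) x = x * g n x + D (g n x)) :
    ∀ (a b : R) (n : ℕ),
      g n (a + b) = ∑ i ∈ Finset.range (n + 1), (n.choose i : R) * g i a * g (n - i) b := by
  let D' : R →+ R := AddMonoidHom.mk' D hDadd
  have hg : ∀ n x, g n x = (AddMonoidHom.mulLeft x + D')^[n] 1 := by
    intro n x
    induction n with
    | zero => exact hg0 x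
    | succ n ih => rw [hgs, Function.iterate_succ_apply', ← ih]; rfl
  intro a b n
  simp only [hg, mul_assoc]
  simpa only [mul_one] using
    iterate_map_mul_eq_sum_choose _ _ _ (mulLeft_add_map_mul D' hDmul a b) 1 1 n
end

section
/- Let R be a commutative ring that is a ℚ-algebra, D : R → R a derivation, and N ⊆ R an ideal such that N^s = 0 for some s ≥ 1 and D(N^j) ⊆ N^{j+1} for every j ≥ 1. For x ∈ R define g_n(x) recursively by g_0(x) = 1 and g_{n+1}(x) = x·g_n(x) + D(g_n(x)), and for a ∈ N set E(a) = Σ_{n=0}^{s−1} g_n(a)/n!. Then for all a, b ∈ N: (i) g_n(a) ∈ N^n for every n ≥ 0 (in particular g_n(a) = 0 for n ≥ s); (ii) E(a + b) = E(a)·E(b); (iii) E(a) is a unit of R and E(a) ≡ 1 modulo N. -/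
/-!
Write `T_x y = x y + D y`, so that `g_n(x) = T_xⁿ 1`. The Leibniz rule gives
`T_{a+b}(u v) = T_a(u) v + u T_b(v)`, hence the binomial formula
`g_n(a + b) = ∑ C(n, k) g_k(a) g_{n-k}(b)`. Since `T_a` raises the `N`-adic filtration,
`g_n(a) ∈ Nⁿ`, so every term `g_i(a) g_j(b)` with `i + j ≥ s` vanishes and the truncated
exponential `E` turns sums into products; then `E(a) E(-a) = E(0) = 1`.
-/

open Finset Nat

theorem Finset.sum_range_sum_antidiagonal_eq_sum_range_sum_range {M : Type*} [AddCommMonoid M]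
    {s : ℕ} {f : ℕ → ℕ → M} (hf : ∀ i j, s ≤ i + j → f i j = 0) :
    ∑ n ∈ range s, ∑ ij ∈ antidiagonal n, f ij.1 ij.2 = ∑ i ∈ range s, ∑ j ∈ range s, f i j :=
  calc ∑ n ∈ range s, ∑ ij ∈ antidiagonal n, f ij.1 ij.2
      = ∑ n ∈ range s, ∑ k ∈ range (n + 1), f k (n - k) :=
        sum_congr rfl fun n _ => Nat.sum_antidiagonal_eq_sum_range_succ f n
    _ = ∑ i ∈ range s, ∑ j ∈ range (s - i), f i j := sum_range_diag_flip s f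
    _ = ∑ i ∈ range s, ∑ j ∈ range s, f i j :=
        sum_congr rfl fun i _ => sum_subset (range_subset_range.2 (Nat.sub_le s i))
          fun j _ hj => hf i j (by simp only [mem_range] at hj; omega)

theorem sum_range_inv_factorial_smul_eq_mul {R : Type*} [Semiring R] [Algebra ℚ R] {s : ℕ}
    {p q r : ℕ → R} (hr : ∀ n, r n = ∑ ij ∈ antidiagonal n, n.choose ij.1 • (p ij.1 * q ij.2))
    (hpq : ∀ i j, s ≤ i + j → p i * q j = 0) :
    ∑ n ∈ range s, (n ! : ℚ)⁻¹ • r n =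
      (∑ n ∈ range s, (n ! : ℚ)⁻¹ • p n) * ∑ n ∈ range s, (n ! : ℚ)⁻¹ • q n := by
  rw [sum_mul_sum, ← sum_range_sum_antidiagonal_eq_sum_range_sum_range fun i j h => by
    rw [smul_mul_smul_comm, hpq i j h, smul_zero]]
  refine sum_congr rfl fun n _ => ?_
  rw [hr, smul_sum]
  refine sum_congr rfl fun ij hij => ?_
  obtain rfl := mem_antidiagonal.1 hij
  rw [smul_mul_smul_comm, ← Nat.cast_smul_eq_nsmul ℚ, smul_smul, Nat.cast_add_choose]
  congr 1
  field_simp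

lemma Ideal.mul_eq_zero_of_mem_pow {R : Type*} [CommSemiring R] {N : Ideal R} {s i j : ℕ}
    (hNs : N ^ s = ⊥) (hij : s ≤ i + j) {x y : R} (hx : x ∈ N ^ i) (hy : y ∈ N ^ j) :
    x * y = 0 := by
  have hxy : x * y ∈ N ^ s := Ideal.pow_le_pow_right hij (pow_add N i j ▸ Ideal.mul_mem_mul hx hy)
  rwa [hNs, Ideal.mem_bot] at hxy

namespace Derivation

section

variable {A R : Type*} [CommSemiring A] [CommSemiring R] [Algebra A R] (D : Derivation A R R)

def twist (x : R) : Module.End A R := LinearMap.mulLeft A x + D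

@[simp]
lemma twist_apply (x y : R) : D.twist x y = x * y + D y := rfl

lemma twist_add_apply_mul (a b u v : R) :
    D.twist (a + b) (u * v) = D.twist a u * v + u * D.twist b v := by
  simp only [twist_apply, leibniz, smul_eq_mul]
  ring

theorem iterate_twist_add_apply_mul (a b u v : R) (n : ℕ) :
    (D.twist (a + b))^[n] (u * v) =
      ∑ ij ∈ antidiagonal n, n.choose ij.1 • ((D.twist a)^[ij.1] u * (D.twist b)^[ij.2] v) := by
  induction n with
  | zero => simp
  | succ n ih =>
    rw [sum_antidiagonal_choose_succ_nsmul (fun i j => (D.twist a)^[i] u * (D.twist b)^[j] v) n]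
    simp only [Function.iterate_succ_apply', ih, map_sum, map_nsmul, twist_add_apply_mul,
      smul_add, sum_add_distrib, add_comm]
    refine congrArg _ (sum_congr rfl fun ij hij => by
      rw [n.choose_symm_of_eq_add (mem_antidiagonal.1 hij).symm])

variable {N : Ideal R} {a : R}

lemma twist_mem_pow_succ (ha : a ∈ N) (hD : ∀ j, 1 ≤ j → ∀ x ∈ N ^ j, D x ∈ N ^ (j + 1))
    {j : ℕ} (hj : 1 ≤ j) {x : R} (hx : x ∈ N ^ j) : D.twist a x ∈ N ^ (j + 1) :=
  add_mem (pow_succ' N j ▸ Ideal.mul_mem_mul ha hx) (hD j hj x hx)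

lemma iterate_twist_one_mem_pow (ha : a ∈ N)
    (hD : ∀ j, 1 ≤ j → ∀ x ∈ N ^ j, D x ∈ N ^ (j + 1)) (n : ℕ) : (D.twist a)^[n] 1 ∈ N ^ n := by
  induction n with
  | zero => simp
  | succ n ih =>
    rw [Function.iterate_succ_apply']
    rcases Nat.eq_zero_or_pos n with rfl | hn
    · simpa using ha
    · exact D.twist_mem_pow_succ ha hD hn ih

lemma iterate_twist_zero_one {n : ℕ} (hn : n ≠ 0) : (D.twist 0)^[n] 1 = 0 := by
  obtain ⟨m, rfl⟩ := Nat.exists_eq_succ_of_ne_zero hn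
  rw [Function.iterate_succ_apply, twist_apply, zero_mul, zero_add, map_one_eq_zero]
  exact iterate_map_zero _ m

end

section

variable {A R : Type*} [CommSemiring A] [CommRing R] [Algebra A R] [Algebra ℚ R]
  (D : Derivation A R R) {N : Ideal R} {s : ℕ} {a b : R}

noncomputable def twistExp (s : ℕ) (a : R) : R := ∑ n ∈ range s, (n ! : ℚ)⁻¹ • (D.twist a)^[n] 1

lemma twistExp_add (hNs : N ^ s = ⊥) (hD : ∀ j, 1 ≤ j → ∀ x ∈ N ^ j, D x ∈ N ^ (j + 1))
    (ha : a ∈ N) (hb : b ∈ N) : D.twistExp s (a + b) = D.twistExp s a * D.twistExp s b :=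
  sum_range_inv_factorial_smul_eq_mul
    (fun n => by simpa using D.iterate_twist_add_apply_mul a b 1 1 n)
    fun i j hij => Ideal.mul_eq_zero_of_mem_pow hNs hij (D.iterate_twist_one_mem_pow ha hD i)
      (D.iterate_twist_one_mem_pow hb hD j)

lemma twistExp_zero (hs : 1 ≤ s) : D.twistExp s 0 = 1 := by
  rw [twistExp, sum_eq_single_of_mem 0 (mem_range.2 hs) fun n _ hn => by
    rw [D.iterate_twist_zero_one hn, smul_zero]]
  simp

lemma isUnit_twistExp (hs : 1 ≤ s) (hNs : N ^ s = ⊥)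
    (hD : ∀ j, 1 ≤ j → ∀ x ∈ N ^ j, D x ∈ N ^ (j + 1)) (ha : a ∈ N) : IsUnit (D.twistExp s a) :=
  .of_mul_eq_one (D.twistExp s (-a)) <| by
    rw [← D.twistExp_add hNs hD ha (neg_mem ha), add_neg_cancel, D.twistExp_zero hs]

lemma twistExp_sub_one_mem (hs : 1 ≤ s) (hD : ∀ j, 1 ≤ j → ∀ x ∈ N ^ j, D x ∈ N ^ (j + 1))
    (ha : a ∈ N) : D.twistExp s a - 1 ∈ N := by
  obtain ⟨t, rfl⟩ := Nat.exists_eq_add_of_le' hs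
  rw [twistExp, sum_range_succ']
  simp only [factorial_zero, cast_one, inv_one, Function.iterate_zero, id_eq, one_smul,
    add_sub_cancel_right]
  exact sum_mem fun n _ => Submodule.smul_of_tower_mem _ _ <|
    Ideal.pow_le_self n.succ_ne_zero (D.iterate_twist_one_mem_pow ha hD (n + 1))

end

end Derivation

/-- Exponentials of log derivations: over a `ℚ`-algebra with a nilpotent ideal `N`
satisfying `D(N^j) ⊆ N^{j+1}`, setting `E(a) = ∑_{n<s} g_n(a)/n!` for `a ∈ N`,
one has `g_n(a) ∈ N^n`, `E(a+b) = E(a)·E(b)`, `E(a)` is a unit, and `E(a) ≡ 1 mod N`. -/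
theorem stmt3 (R : Type*) [CommRing R] [Algebra ℚ R] (D : R → R)
    (hDadd : ∀ x y, D (x + y) = D x + D y)
    (hDmul : ∀ x y, D (x * y) = x * D y + D x * y)
    (N : Ideal R) (s : ℕ) (hs : 1 ≤ s) (hNs : N ^ s = ⊥)
    (hDN : ∀ j : ℕ, 1 ≤ j → ∀ x ∈ N ^ j, D x ∈ N ^ (j + 1))
    (g : ℕ → R → R)
    (hg0 : ∀ x, g 0 x = 1)
    (hgs : ∀ n x, g (n + 1) x = x * g n x + D (g n x))
    (E : R → R)
    (hE : ∀ a, E a = ∑ n ∈ Finset.range s, ((n.factorial : ℚ)⁻¹) • g n a) :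
    ∀ a ∈ N, ∀ b ∈ N,
      (∀ n : ℕ, g n a ∈ N ^ n) ∧
      E (a + b) = E a * E b ∧
      IsUnit (E a) ∧ E a - 1 ∈ N := by
  let D' : Derivation ℤ R R := .mk' (AddMonoidHom.mk' D hDadd).toIntLinearMap fun x y => by
    simp [hDmul, mul_comm]
  have hg : ∀ n x, g n x = (D'.twist x)^[n] 1 := fun n x => by
    induction n with
    | zero => exact hg0 x
    | succ n ih => rw [hgs, ih, Function.iterate_succ_apply']; rfl
  have hE' : E = D'.twistExp s := funext fun a => by simp only [hE, hg, Derivation.twistExp]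
  intro a ha b hb
  simp only [hg, hE']
  exact ⟨D'.iterate_twist_one_mem_pow ha hDN, D'.twistExp_add hNs hDN ha hb,
    D'.isUnit_twistExp hs hNs hDN ha, D'.twistExp_sub_one_mem hs hDN ha⟩
end

section
/- Let R be a commutative ring and σ : R → R a ring homomorphism. For u ∈ R define the sequence N_i(u) ∈ R recursively by N_0(u) = 1 and N_i(u) = u·σ(N_{i−1}(u)) − N_{i−1}(u) for i ≥ 1. Then for all u, v ∈ R and all n ≥ 0, N_n(u·v) = Σ_{i+j+k=n, i,j,k ≥ 0} (n!/(i!·j!·k!)) · N_{i+j}(u) · N_{i+k}(v), where n!/(i!·j!·k!) is the multinomial coefficient. -/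
open Nat

private lemma M3_spec (i j k : ℕ) :
    Nat.multinomial Finset.univ ![i, j, k] * (i ! * j ! * k !) = (i + j + k)! := by
  have h := Nat.multinomial_spec (Finset.univ : Finset (Fin 3)) ![i, j, k]
  simp only [Fin.sum_univ_three, Fin.prod_univ_three, Matrix.cons_val_zero, Matrix.cons_val_one,
    Matrix.head_cons, Matrix.cons_val_two, Matrix.tail_cons] at h
  rw [mul_comm] at h
  exact h

private lemma aux1 (a j k : ℕ) :
    Nat.multinomial Finset.univ ![a, j, k] * ((a+1)! * j ! * k !) = (a+1) * (a + j + k)! := by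
  rw [Nat.factorial_succ, ← M3_spec a j k]; ring

private lemma aux2 (i b k : ℕ) :
    Nat.multinomial Finset.univ ![i, b, k] * (i ! * (b+1)! * k !) = (b+1) * (i + b + k)! := by
  rw [Nat.factorial_succ, ← M3_spec i b k]; ring

private lemma aux3 (i j c : ℕ) :
    Nat.multinomial Finset.univ ![i, j, c] * (i ! * j ! * (c+1)!) = (c+1) * (i + j + c)! := by
  rw [Nat.factorial_succ, ← M3_spec i j c]; ring

private lemma pascal3 (i j k : ℕ) (h : i + j + k ≠ 0) :
    Nat.multinomial Finset.univ ![i, j, k] =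
      (if i = 0 then 0 else Nat.multinomial Finset.univ ![i-1, j, k]) +
      (if j = 0 then 0 else Nat.multinomial Finset.univ ![i, j-1, k]) +
      (if k = 0 then 0 else Nat.multinomial Finset.univ ![i, j, k-1]) := by
  have hpos : 0 < i ! * j ! * k ! := by positivity
  apply Nat.eq_of_mul_eq_mul_right hpos
  rw [M3_spec, add_mul, add_mul]
  rcases i with _ | a <;> rcases j with _ | b <;> rcases k with _ | c <;>
    simp only [if_pos rfl, if_neg (Nat.succ_ne_zero _), ite_true, ite_false,
      Nat.succ_sub_one, zero_mul, add_zero, zero_add]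
  · exact absurd rfl h
  · rw [aux3]; simp [Nat.factorial_succ]
  · rw [aux2]; simp [Nat.factorial_succ]
  · rw [aux2, aux3, show 0+b+(c+1) = b+c+1 by omega, show 0+(b+1)+c = b+c+1 by omega,
      show b+1+(c+1) = (b+c+1)+1 by omega, Nat.factorial_succ]
    ring
  · rw [aux1]; simp [Nat.factorial_succ]
  · rw [aux1, aux3, show a+0+(c+1) = a+c+1 by omega, show (a+1)+0+c = a+c+1 by omega,
      show a+1+(c+1) = (a+c+1)+1 by omega, Nat.factorial_succ]
    ring
  · rw [aux1, aux2, show a+(b+1)+0 = a+b+1 by omega, show (a+1)+b+0 = a+b+1 by omega,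
      show a+1+(b+1) = (a+b+1)+1 by omega, Nat.factorial_succ]
    ring
  · rw [aux1, aux2, aux3, show a+(b+1)+(c+1) = a+b+c+2 by omega,
      show (a+1)+b+(c+1) = a+b+c+2 by omega, show (a+1)+(b+1)+c = a+b+c+2 by omega,
      show a+1+(b+1)+(c+1) = (a+b+c+2)+1 by omega, Nat.factorial_succ]
    ring

/-- Multinomial identity for the sequence `N_i(u)` defined from a ring endomorphism `σ`
by `N_0(u) = 1`, `N_i(u) = u·σ(N_{i-1}(u)) − N_{i-1}(u)`:
`N_n(uv) = ∑_{i+j+k=n} (n!/(i!j!k!)) N_{i+j}(u) N_{i+k}(v)`. -/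
theorem stmt4 (R : Type*) [CommRing R] (σ : R →+* R)
    (N : ℕ → R → R)
    (hN0 : ∀ u, N 0 u = 1)
    (hNs : ∀ i u, N (i + 1) u = u * σ (N i u) - N i u) :
    ∀ (u v : R) (n : ℕ),
      N n (u * v) =
        ∑ p ∈ (Finset.range (n + 1) ×ˢ (Finset.range (n + 1) ×ˢ Finset.range (n + 1))).filter
            (fun p : ℕ × ℕ × ℕ => p.1 + p.2.1 + p.2.2 = n),
          (Nat.multinomial Finset.univ ![p.1, p.2.1, p.2.2] : R) *
            N (p.1 + p.2.1) u * N (p.1 + p.2.2) v := by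
  intro u v n
  induction n with
  | zero =>
    rw [hN0]
    rw [show Finset.range (0+1) = {0} from rfl]
    rw [show ({0} ×ˢ (({0} : Finset ℕ) ×ˢ ({0} : Finset ℕ)) : Finset (ℕ × ℕ × ℕ)) = {(0,0,0)} from rfl]
    simp [Finset.filter_singleton, hN0, Nat.multinomial, Fin.sum_univ_three, Fin.prod_univ_three]
  | succ n ih =>
    have hswap : ∀ (a : ℕ) (w : R), w * σ (N a w) = N (a+1) w + N a w := by
      intro a w; rw [hNs]; ring
    rw [hNs n (u*v), ih, map_sum, Finset.mul_sum, ← Finset.sum_sub_distrib]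
    have step1 : ∀ p ∈ (Finset.range (n + 1) ×ˢ (Finset.range (n + 1) ×ˢ Finset.range (n + 1))).filter
            (fun p : ℕ × ℕ × ℕ => p.1 + p.2.1 + p.2.2 = n),
        u * v * σ ((Nat.multinomial Finset.univ ![p.1, p.2.1, p.2.2] : R) *
            N (p.1 + p.2.1) u * N (p.1 + p.2.2) v) -
          (Nat.multinomial Finset.univ ![p.1, p.2.1, p.2.2] : R) *
            N (p.1 + p.2.1) u * N (p.1 + p.2.2) v
        = (Nat.multinomial Finset.univ ![p.1, p.2.1, p.2.2] : R) *
            (N (p.1 + p.2.1 + 1) u * N (p.1 + p.2.2 + 1) v)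
          + (Nat.multinomial Finset.univ ![p.1, p.2.1, p.2.2] : R) *
            (N (p.1 + p.2.1 + 1) u * N (p.1 + p.2.2) v)
          + (Nat.multinomial Finset.univ ![p.1, p.2.1, p.2.2] : R) *
            (N (p.1 + p.2.1) u * N (p.1 + p.2.2 + 1) v) := by
      intro p hp
      rw [map_mul, map_mul, map_natCast,
        show u * v * ((Nat.multinomial Finset.univ ![p.1, p.2.1, p.2.2] : R) *
            σ (N (p.1 + p.2.1) u) * σ (N (p.1 + p.2.2) v)) -
          (Nat.multinomial Finset.univ ![p.1, p.2.1, p.2.2] : R) *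
            N (p.1 + p.2.1) u * N (p.1 + p.2.2) v
          = (Nat.multinomial Finset.univ ![p.1, p.2.1, p.2.2] : R) *
            ((u * σ (N (p.1 + p.2.1) u)) * (v * σ (N (p.1 + p.2.2) v)))
          - (Nat.multinomial Finset.univ ![p.1, p.2.1, p.2.2] : R) *
            (N (p.1 + p.2.1) u * N (p.1 + p.2.2) v) from by ring,
        hswap, hswap]
      ring
    rw [Finset.sum_congr rfl step1]
    have hp1 : ∀ q ∈ (Finset.range (n + 1 + 1) ×ˢ (Finset.range (n + 1 + 1) ×ˢ Finset.range (n + 1 + 1))).filter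
            (fun p : ℕ × ℕ × ℕ => p.1 + p.2.1 + p.2.2 = n + 1),
        ((if q.1 = 0 then 0 else Nat.multinomial Finset.univ ![q.1 - 1, q.2.1, q.2.2] : ℕ) : R) *
            N (q.1 + q.2.1) u * N (q.1 + q.2.2) v ≠ 0 → ¬ q.1 = 0 := by
      intro q hq hne h0
      exact hne (by simp [h0])
    have e1 : (∑ q ∈ (Finset.range (n + 1 + 1) ×ˢ (Finset.range (n + 1 + 1) ×ˢ Finset.range (n + 1 + 1))).filter
            (fun p : ℕ × ℕ × ℕ => p.1 + p.2.1 + p.2.2 = n + 1),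
          ((if q.1 = 0 then 0 else Nat.multinomial Finset.univ ![q.1 - 1, q.2.1, q.2.2] : ℕ) : R) *
            N (q.1 + q.2.1) u * N (q.1 + q.2.2) v)
        = ∑ p ∈ (Finset.range (n + 1) ×ˢ (Finset.range (n + 1) ×ˢ Finset.range (n + 1))).filter
            (fun p : ℕ × ℕ × ℕ => p.1 + p.2.1 + p.2.2 = n),
          (Nat.multinomial Finset.univ ![p.1, p.2.1, p.2.2] : R) *
            (N (p.1 + p.2.1 + 1) u * N (p.1 + p.2.2 + 1) v) := by
      rw [← Finset.sum_filter_of_ne hp1]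
      refine Finset.sum_nbij' (i := fun q : ℕ × ℕ × ℕ => (q.1 - 1, q.2.1, q.2.2))
        (j := fun p : ℕ × ℕ × ℕ => (p.1 + 1, p.2.1, p.2.2)) ?_ ?_ ?_ ?_ ?_
      · rintro ⟨a, b, c⟩ hq
        simp only [Finset.mem_filter, Finset.mem_product, Finset.mem_range] at hq ⊢
        omega
      · rintro ⟨a, b, c⟩ hp
        simp only [Finset.mem_filter, Finset.mem_product, Finset.mem_range] at hp ⊢
        omega
      · rintro ⟨a, b, c⟩ hq
        simp only [Finset.mem_filter, Finset.mem_product, Finset.mem_range] at hq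
        simp only [Prod.mk.injEq]
        exact ⟨by omega, trivial⟩
      · rintro ⟨a, b, c⟩ hp
        simp only [Prod.mk.injEq]
        exact ⟨by omega, trivial⟩
      · rintro ⟨a, b, c⟩ hq
        simp only [Finset.mem_filter, Finset.mem_product, Finset.mem_range] at hq
        have ha : ¬ a = 0 := hq.2
        simp only [if_neg ha]
        rw [show a - 1 + b + 1 = a + b by omega, show a - 1 + c + 1 = a + c by omega]
        ring
    have hp2 : ∀ q ∈ (Finset.range (n + 1 + 1) ×ˢ (Finset.range (n + 1 + 1) ×ˢ Finset.range (n + 1 + 1))).filter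
            (fun p : ℕ × ℕ × ℕ => p.1 + p.2.1 + p.2.2 = n + 1),
        ((if q.2.1 = 0 then 0 else Nat.multinomial Finset.univ ![q.1, q.2.1 - 1, q.2.2] : ℕ) : R) *
            N (q.1 + q.2.1) u * N (q.1 + q.2.2) v ≠ 0 → ¬ q.2.1 = 0 := by
      intro q hq hne h0
      exact hne (by simp [h0])
    have e2 : (∑ q ∈ (Finset.range (n + 1 + 1) ×ˢ (Finset.range (n + 1 + 1) ×ˢ Finset.range (n + 1 + 1))).filter
            (fun p : ℕ × ℕ × ℕ => p.1 + p.2.1 + p.2.2 = n + 1),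
          ((if q.2.1 = 0 then 0 else Nat.multinomial Finset.univ ![q.1, q.2.1 - 1, q.2.2] : ℕ) : R) *
            N (q.1 + q.2.1) u * N (q.1 + q.2.2) v)
        = ∑ p ∈ (Finset.range (n + 1) ×ˢ (Finset.range (n + 1) ×ˢ Finset.range (n + 1))).filter
            (fun p : ℕ × ℕ × ℕ => p.1 + p.2.1 + p.2.2 = n),
          (Nat.multinomial Finset.univ ![p.1, p.2.1, p.2.2] : R) *
            (N (p.1 + p.2.1 + 1) u * N (p.1 + p.2.2) v) := by
      rw [← Finset.sum_filter_of_ne hp2]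
      refine Finset.sum_nbij' (i := fun q : ℕ × ℕ × ℕ => (q.1, q.2.1 - 1, q.2.2))
        (j := fun p : ℕ × ℕ × ℕ => (p.1, p.2.1 + 1, p.2.2)) ?_ ?_ ?_ ?_ ?_
      · rintro ⟨a, b, c⟩ hq
        simp only [Finset.mem_filter, Finset.mem_product, Finset.mem_range] at hq ⊢
        omega
      · rintro ⟨a, b, c⟩ hp
        simp only [Finset.mem_filter, Finset.mem_product, Finset.mem_range] at hp ⊢
        omega
      · rintro ⟨a, b, c⟩ hq
        simp only [Finset.mem_filter, Finset.mem_product, Finset.mem_range] at hq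
        simp only [Prod.mk.injEq]
        exact ⟨trivial, by omega, trivial⟩
      · rintro ⟨a, b, c⟩ hp
        simp only [Prod.mk.injEq]
        exact ⟨trivial, by omega, trivial⟩
      · rintro ⟨a, b, c⟩ hq
        simp only [Finset.mem_filter, Finset.mem_product, Finset.mem_range] at hq
        have hb : ¬ b = 0 := hq.2
        simp only [if_neg hb]
        rw [show a + (b - 1) + 1 = a + b by omega]
        ring
    have hp3 : ∀ q ∈ (Finset.range (n + 1 + 1) ×ˢ (Finset.range (n + 1 + 1) ×ˢ Finset.range (n + 1 + 1))).filter
            (fun p : ℕ × ℕ × ℕ => p.1 + p.2.1 + p.2.2 = n + 1),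
        ((if q.2.2 = 0 then 0 else Nat.multinomial Finset.univ ![q.1, q.2.1, q.2.2 - 1] : ℕ) : R) *
            N (q.1 + q.2.1) u * N (q.1 + q.2.2) v ≠ 0 → ¬ q.2.2 = 0 := by
      intro q hq hne h0
      exact hne (by simp [h0])
    have e3 : (∑ q ∈ (Finset.range (n + 1 + 1) ×ˢ (Finset.range (n + 1 + 1) ×ˢ Finset.range (n + 1 + 1))).filter
            (fun p : ℕ × ℕ × ℕ => p.1 + p.2.1 + p.2.2 = n + 1),
          ((if q.2.2 = 0 then 0 else Nat.multinomial Finset.univ ![q.1, q.2.1, q.2.2 - 1] : ℕ) : R) *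
            N (q.1 + q.2.1) u * N (q.1 + q.2.2) v)
        = ∑ p ∈ (Finset.range (n + 1) ×ˢ (Finset.range (n + 1) ×ˢ Finset.range (n + 1))).filter
            (fun p : ℕ × ℕ × ℕ => p.1 + p.2.1 + p.2.2 = n),
          (Nat.multinomial Finset.univ ![p.1, p.2.1, p.2.2] : R) *
            (N (p.1 + p.2.1) u * N (p.1 + p.2.2 + 1) v) := by
      rw [← Finset.sum_filter_of_ne hp3]
      refine Finset.sum_nbij' (i := fun q : ℕ × ℕ × ℕ => (q.1, q.2.1, q.2.2 - 1))
        (j := fun p : ℕ × ℕ × ℕ => (p.1, p.2.1, p.2.2 + 1)) ?_ ?_ ?_ ?_ ?_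
      · rintro ⟨a, b, c⟩ hq
        simp only [Finset.mem_filter, Finset.mem_product, Finset.mem_range] at hq ⊢
        omega
      · rintro ⟨a, b, c⟩ hp
        simp only [Finset.mem_filter, Finset.mem_product, Finset.mem_range] at hp ⊢
        omega
      · rintro ⟨a, b, c⟩ hq
        simp only [Finset.mem_filter, Finset.mem_product, Finset.mem_range] at hq
        simp only [Prod.mk.injEq]
        exact ⟨trivial, trivial, by omega⟩
      · rintro ⟨a, b, c⟩ hp
        simp only [Prod.mk.injEq]
        exact ⟨trivial, trivial, by omega⟩
      · rintro ⟨a, b, c⟩ hq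
        simp only [Finset.mem_filter, Finset.mem_product, Finset.mem_range] at hq
        have hc : ¬ c = 0 := hq.2
        simp only [if_neg hc]
        rw [show a + (c - 1) + 1 = a + c by omega]
        ring
    have epas : ∀ q ∈ (Finset.range (n + 1 + 1) ×ˢ (Finset.range (n + 1 + 1) ×ˢ Finset.range (n + 1 + 1))).filter
            (fun p : ℕ × ℕ × ℕ => p.1 + p.2.1 + p.2.2 = n + 1),
        (Nat.multinomial Finset.univ ![q.1, q.2.1, q.2.2] : R) *
            N (q.1 + q.2.1) u * N (q.1 + q.2.2) v
        = ((if q.1 = 0 then 0 else Nat.multinomial Finset.univ ![q.1 - 1, q.2.1, q.2.2] : ℕ) : R) *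
            N (q.1 + q.2.1) u * N (q.1 + q.2.2) v
          + ((if q.2.1 = 0 then 0 else Nat.multinomial Finset.univ ![q.1, q.2.1 - 1, q.2.2] : ℕ) : R) *
            N (q.1 + q.2.1) u * N (q.1 + q.2.2) v
          + ((if q.2.2 = 0 then 0 else Nat.multinomial Finset.univ ![q.1, q.2.1, q.2.2 - 1] : ℕ) : R) *
            N (q.1 + q.2.1) u * N (q.1 + q.2.2) v := by
      intro q hq
      have hsum : q.1 + q.2.1 + q.2.2 = n + 1 := (Finset.mem_filter.mp hq).2
      rw [pascal3 q.1 q.2.1 q.2.2 (by omega)]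
      push_cast
      ring
    rw [Finset.sum_congr rfl epas, Finset.sum_add_distrib, Finset.sum_add_distrib,
      Finset.sum_add_distrib, Finset.sum_add_distrib, e1, e2, e3]
end

section
/- Let k be a commutative ring, R a commutative k-algebra, P an additive commutative monoid, and z : P → R a multiplicative map, i.e. z(0) = 1 and z(m + m') = z(m)·z(m') for all m, m' ∈ P. Let n, n₀ : P → ℤ be additive maps, and let D_n, D_{n₀} : R → R be k-linear derivations satisfying D_n(z(m)) = n(m)·z(m) and D_{n₀}(z(m)) = n₀(m)·z(m) for all m ∈ P. Let h ∈ R be a unit and θ̄ : R → R a k-algebra automorphism such that θ̄(z(m)) = h^{−n₀(m)}·z(m) for all m ∈ P, θ̄(h) = h, and θ̄(D_n(h)) = D_n(h). Then for all m, m' ∈ P: (θ̄ ∘ (z(m)·D_n) ∘ θ̄^{−1})(z(m')) = z(m)·( h^{−n₀(m)}·D_n(z(m')) + h^{−n₀(m)−1}·D_n(h)·D_{n₀}(z(m')) ). -/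
lemma aux_zpow {k R : Type*} [CommRing k] [CommRing R] [Algebra k R]
    (D : Derivation k R R) (u : Rˣ) (a : ℤ) :
    D ((u ^ a : Rˣ) : R) = (a : R) * ((u ^ (a - 1) : Rˣ) : R) * D (u : R) := by
  have hinv : D ((u⁻¹ : Rˣ) : R) = -((u⁻¹ : Rˣ) : R) ^ 2 * D (u : R) := by
    simpa [smul_eq_mul] using D.leibniz_of_mul_eq_one (a := ((u⁻¹ : Rˣ) : R)) (b := (u : R))
      (by rw [← Units.val_mul, inv_mul_cancel, Units.val_one])
  have hval : ∀ (w : Rˣ) (n : ℕ), ((w ^ (n : ℤ) : Rˣ) : R) = ((w : R)) ^ n := by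
    intro w n; rw [zpow_natCast, Units.val_pow_eq_pow_val]
  have hvalneg : ∀ n : ℕ, ((u ^ (Int.negSucc n) : Rˣ) : R) = ((u⁻¹ : Rˣ) : R) ^ (n + 1) := by
    intro n
    rw [zpow_negSucc, ← inv_pow, Units.val_pow_eq_pow_val]
  rcases a with n | n
  · simp only [Int.ofNat_eq_natCast]
    cases n with
    | zero => simp
    | succ m =>
      have e : (((m + 1 : ℕ) : ℤ) - 1) = ((m : ℕ) : ℤ) := by push_cast; ring
      rw [hval, e, hval, D.leibniz_pow]
      simp only [smul_eq_mul, nsmul_eq_mul, Nat.add_sub_cancel]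
      push_cast; ring
  · have e : (Int.negSucc n) - 1 = Int.negSucc (n + 1) := by
      rw [Int.negSucc_eq, Int.negSucc_eq]; push_cast; ring
    rw [e, hvalneg, hvalneg, D.leibniz_pow, hinv]
    simp only [smul_eq_mul, nsmul_eq_mul, Nat.add_sub_cancel, Int.cast_negSucc]
    push_cast; ring

/-- Ring-level conjugation lemma: conjugating the log derivation `z(m)·D_n` by the
log automorphism `θ̄` with `θ̄(z(m)) = h^{-n₀(m)}·z(m)` gives
`z(m)·(h^{-n₀(m)}·D_n + h^{-n₀(m)-1}·D_n(h)·D_{n₀})` on monomials. -/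
theorem stmt6 (k R P : Type*) [CommRing k] [CommRing R] [Algebra k R]
    [AddCommMonoid P]
    (z : P → R) (hz0 : z 0 = 1) (hzadd : ∀ m m', z (m + m') = z m * z m')
    (nn n0 : P →+ ℤ)
    (Dn Dn0 : Derivation k R R)
    (hDn : ∀ m, Dn (z m) = ((nn m : ℤ) : R) * z m)
    (hDn0 : ∀ m, Dn0 (z m) = ((n0 m : ℤ) : R) * z m)
    (h : Rˣ) (θ : R ≃ₐ[k] R)
    (hθz : ∀ m, θ (z m) = ((h ^ (-(n0 m)) : Rˣ) : R) * z m)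
    (hθh : θ (h : R) = (h : R))
    (hθDnh : θ (Dn (h : R)) = Dn (h : R)) :
    ∀ m m', θ (z m * Dn (θ.symm (z m'))) =
      z m * (((h ^ (-(n0 m)) : Rˣ) : R) * Dn (z m')
        + ((h ^ (-(n0 m) - 1) : Rˣ) : R) * Dn (h : R) * Dn0 (z m')) := by
  intro m m'
  have key : ∀ x y : ℤ, ((h ^ x : Rˣ) : R) * ((h ^ y : Rˣ) : R) = ((h ^ (x + y) : Rˣ) : R) := by
    intro x y; rw [← Units.val_mul, ← zpow_add]
  have r1 : ((h ^ (n0 m') : Rˣ) : R) * ((h ^ (-(n0 m')) : Rˣ) : R) = 1 := by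
    rw [key, add_neg_cancel, zpow_zero, Units.val_one]
  have r2 : ((h ^ (-(n0 m)) : Rˣ) : R) * (((h ^ ((n0 m') - 1) : Rˣ) : R)
      * ((h ^ (-(n0 m')) : Rˣ) : R)) = ((h ^ (-(n0 m) - 1) : Rˣ) : R) := by
    rw [key, key]
    congr 1
    rw [(by ring : (-(n0 m)) + ((n0 m' - 1) + (-(n0 m'))) = -(n0 m) - 1)]
  have hθpow : ∀ x : ℤ, θ ((h ^ x : Rˣ) : R) = ((h ^ x : Rˣ) : R) := by
    intro x
    have : Units.map (θ : R →* R) h = h := by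
      ext; simpa using hθh
    calc θ ((h ^ x : Rˣ) : R) = ((Units.map (θ : R →* R) (h ^ x) : Rˣ) : R) := by
          simp only [Units.coe_map, MonoidHom.coe_coe]
      _ = ((h ^ x : Rˣ) : R) := by rw [map_zpow, this]
  have hsymm : θ.symm (z m') = ((h ^ (n0 m') : Rˣ) : R) * z m' := by
    rw [AlgEquiv.symm_apply_eq, map_mul, hθpow, hθz, ← mul_assoc, r1, one_mul]
  rw [hsymm, Dn.leibniz, aux_zpow Dn h (n0 m')]
  simp only [smul_eq_mul, map_add, map_mul, hθpow, hθz, hθDnh, map_intCast, hDn, hDn0]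
  linear_combination ((nn m' : ℤ) : R) * z m * z m' * ((h ^ (-(n0 m)) : Rˣ) : R) * r1
    + ((n0 m' : ℤ) : R) * Dn (h : R) * z m * z m' * r2
end

section
/- Let A be a commutative ring, f ∈ A, and e ≥ 1, k ≥ 0 integers. Then R∪ := A[X,Y,t]/( XY − f·t^e, t^{k+1} ) is a free module over A[t]/(t^{k+1}) with basis given by the images of the monomials X^i for i ≥ 0 together with Y^j for j ≥ 1. -/
open MvPolynomial

/-- The ideal defining `R∪ = A[X,Y,t]/(XY − f·t^e, t^{k+1})`, with
`X = X 0`, `Y = X 1`, `t = X 2`. -/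
noncomputable def stmt8Icup (A : Type*) [CommRing A] (f : A) (e k : ℕ) :
    Ideal (MvPolynomial (Fin 3) A) :=
  Ideal.span {X 0 * X 1 - C f * (X 2) ^ e, (X 2) ^ (k + 1)}

/-!
Write `B = A[t]/(t^{k+1})`. Modulo `XY = f t^e`, a monomial `X^a Y^b t^n` equals
`(f t^e)^{min a b} t^n` times `X^{a-b}` or `Y^{b-a}`, so the images of `X^i, Y^{j+1}` span `R∪`.
For independence, the same rewriting defines an `A`-linear normal form map
`A[X,Y,t] → (ℕ ⊕ ℕ →₀ B)`; it turns multiplication by `XY` into multiplication by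
`f t^e` and multiplication by `t` into multiplication by `t`, hence kills `XY − f t^e` and
`t^{k+1}`, descends to `R∪`, and inverts the basis expansion.
-/

namespace RCup

def reducedIndex (a b : ℕ) : ℕ ⊕ ℕ := if b ≤ a then .inl (a - b) else .inr (b - a - 1)

theorem reducedIndex_succ_succ (a b : ℕ) : reducedIndex (a + 1) (b + 1) = reducedIndex a b := by
  unfold reducedIndex
  split_ifs <;> first | omega | (congr 1; omega)

theorem pow_mul_pow_eq_mul_pow_min {M : Type*} [CommMonoid M] (x y : M) (a b : ℕ) :
    x ^ a * y ^ b =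
      (x * y) ^ min a b * Sum.elim (x ^ ·) (fun j => y ^ (j + 1)) (reducedIndex a b) := by
  unfold reducedIndex
  split_ifs with h
  · obtain ⟨c, rfl⟩ := Nat.exists_eq_add_of_le h
    rw [Nat.add_sub_cancel_left, Sum.elim_inl, min_eq_right h, pow_add, mul_pow]
    ac_rfl
  · obtain ⟨c, rfl⟩ := Nat.exists_eq_add_of_lt (not_le.mp h)
    rw [Sum.elim_inr, min_eq_left (by omega), show a + c + 1 - a - 1 + 1 = c + 1 by omega,
      add_assoc, pow_add, mul_pow]
    ac_rfl

variable (A : Type*) [CommRing A] (f : A) (e k : ℕ)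

abbrev Base := Polynomial A ⧸ Ideal.span {(Polynomial.X : Polynomial A) ^ (k + 1)}

noncomputable def t : Base A k := Ideal.Quotient.mk _ Polynomial.X

variable {A}

theorem t_pow_succ_eq_zero : t A k ^ (k + 1) = 0 := by
  rw [t, ← map_pow, Ideal.Quotient.eq_zero_iff_mem]
  exact Ideal.mem_span_singleton_self _

theorem smul_eq_mk_C_mul (a : A) (x : Base A k) :
    a • x = Ideal.Quotient.mk _ (Polynomial.C a) * x :=
  Algebra.smul_def a x

noncomputable def monomialNormalForm (a b n : ℕ) : (ℕ ⊕ ℕ) →₀ Base A k :=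
  Finsupp.single (reducedIndex a b) ((f • t A k ^ e) ^ min a b * t A k ^ n)

noncomputable def normalForm : MvPolynomial (Fin 3) A →ₗ[A] (ℕ ⊕ ℕ) →₀ Base A k :=
  (basisMonomials (Fin 3) A).constr A fun d => monomialNormalForm f e k (d 0) (d 1) (d 2)

theorem normalForm_monomial (d : Fin 3 →₀ ℕ) (a : A) :
    normalForm f e k (monomial d a) = a • monomialNormalForm f e k (d 0) (d 1) (d 2) := by
  have : monomial d a = a • basisMonomials (Fin 3) A d := by
    rw [coe_basisMonomials, smul_monomial, smul_eq_mul, mul_one]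
  rw [this, map_smul, normalForm, Module.Basis.constr_basis]

theorem monomialNormalForm_succ_succ (a b n : ℕ) :
    monomialNormalForm f e k (a + 1) (b + 1) n =
      (f • t A k ^ e) • monomialNormalForm f e k a b n := by
  rw [monomialNormalForm, monomialNormalForm, reducedIndex_succ_succ, Finsupp.smul_single,
    Nat.add_min_add_right]
  congr 1
  rw [smul_eq_mul]
  ring

theorem monomialNormalForm_add_one (a b n : ℕ) :
    monomialNormalForm f e k a b (n + 1) = t A k • monomialNormalForm f e k a b n := by
  rw [monomialNormalForm, monomialNormalForm, Finsupp.smul_single]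
  congr 1
  rw [smul_eq_mul]
  ring

theorem normalForm_mul_X_zero_mul_X_one (p : MvPolynomial (Fin 3) A) :
    normalForm f e k (p * (X 0 * X 1)) = (f • t A k ^ e) • normalForm f e k p := by
  induction p using MvPolynomial.induction_on' with
  | add p q hp hq => rw [add_mul, map_add, hp, hq, map_add, smul_add]
  | monomial d a =>
    rw [X, X, monomial_mul, monomial_mul, mul_one, mul_one, normalForm_monomial,
      normalForm_monomial, smul_comm]
    simp [monomialNormalForm_succ_succ]

theorem normalForm_mul_X_two (p : MvPolynomial (Fin 3) A) :
    normalForm f e k (p * X 2) = t A k • normalForm f e k p := by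
  induction p using MvPolynomial.induction_on' with
  | add p q hp hq => rw [add_mul, map_add, hp, hq, map_add, smul_add]
  | monomial d a =>
    rw [X, monomial_mul, mul_one, normalForm_monomial, normalForm_monomial, smul_comm]
    simp [monomialNormalForm_add_one]

theorem normalForm_mul_X_two_pow (p : MvPolynomial (Fin 3) A) (n : ℕ) :
    normalForm f e k (p * X 2 ^ n) = t A k ^ n • normalForm f e k p := by
  induction n with
  | zero => rw [pow_zero, pow_zero, mul_one, one_smul]
  | succ n ih =>
    rw [pow_succ (X 2 : MvPolynomial (Fin 3) A), ← mul_assoc, normalForm_mul_X_two, ih,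
      pow_succ' (t A k)]
    exact (mul_smul (t A k) (t A k ^ n) (normalForm f e k p)).symm

theorem normalForm_eq_zero_of_mem {p : MvPolynomial (Fin 3) A} (hp : p ∈ stmt8Icup A f e k) :
    normalForm f e k p = 0 := by
  obtain ⟨u, v, rfl⟩ := Ideal.mem_span_pair.mp hp
  have hrel : normalForm f e k (u * (X 0 * X 1 - C f * X 2 ^ e)) = 0 := by
    rw [mul_sub, map_sub, normalForm_mul_X_zero_mul_X_one, mul_left_comm, ← smul_eq_C_mul,
      map_smul, normalForm_mul_X_two_pow, smul_assoc, sub_self]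
  rw [map_add, hrel, normalForm_mul_X_two_pow, t_pow_succ_eq_zero,
    zero_smul (Base A k) (normalForm f e k v), add_zero]

theorem normalForm_mul_aeval (p : MvPolynomial (Fin 3) A) (q : Polynomial A) :
    normalForm f e k (p * Polynomial.aeval (X 2) q) =
      (Ideal.Quotient.mk _ q : Base A k) • normalForm f e k p := by
  induction q using Polynomial.induction_on' with
  | add q r hq hr => rw [map_add, mul_add, map_add, hq, hr, map_add, add_smul]
  | monomial n a =>
    rw [Polynomial.aeval_monomial, algebraMap_eq, mul_left_comm, ← smul_eq_C_mul, map_smul,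
      normalForm_mul_X_two_pow, ← Polynomial.smul_X_eq_monomial, ← Ideal.Quotient.mkₐ_eq_mk A,
      map_smul, map_pow, smul_assoc]
    rfl

noncomputable def basisPoly : ℕ ⊕ ℕ → MvPolynomial (Fin 3) A :=
  Sum.elim (X 0 ^ ·) (fun j => X 1 ^ (j + 1))

theorem normalForm_basisPoly (s : ℕ ⊕ ℕ) :
    normalForm f e k (basisPoly s) = Finsupp.single s 1 := by
  cases s <;>
    simp [basisPoly, X_pow_eq_monomial, normalForm_monomial, monomialNormalForm, reducedIndex]

noncomputable def liftPoly (c : (ℕ ⊕ ℕ) →₀ Base A k) : MvPolynomial (Fin 3) A :=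
  c.sum fun s b => basisPoly s * Polynomial.aeval (X 2) (Quotient.out b)

theorem normalForm_liftPoly (c : (ℕ ⊕ ℕ) →₀ Base A k) :
    normalForm f e k (liftPoly k c) = c := by
  simp only [liftPoly, map_finsuppSum, normalForm_mul_aeval, normalForm_basisPoly,
    Ideal.Quotient.mk_out, Finsupp.smul_single_one, Finsupp.sum_single]

local notation "π" => Ideal.Quotient.mk (stmt8Icup A f e k)

theorem mk_X_zero_mul_X_one : π (X 0 * X 1) = π (C f * X 2 ^ e) :=
  Ideal.Quotient.eq.mpr (Ideal.subset_span (Set.mem_insert _ _))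

theorem normalForm_eq_of_mk_eq {p q : MvPolynomial (Fin 3) A} (h : π p = π q) :
    normalForm f e k p = normalForm f e k q :=
  sub_eq_zero.mp (map_sub (normalForm f e k) p q ▸
    normalForm_eq_zero_of_mem f e k (Ideal.Quotient.eq.mp h))

theorem mk_basisPoly (s : ℕ ⊕ ℕ) :
    π (basisPoly s) = Sum.elim (π (X 0) ^ ·) (fun j => π (X 1) ^ (j + 1)) s := by
  cases s <;> simp [basisPoly]

theorem mk_monomial (d : Fin 3 →₀ ℕ) (a : A) :
    π (monomial d a) = π (C a * (C f * X 2 ^ e) ^ min (d 0) (d 1) * X 2 ^ d 2 *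
      basisPoly (reducedIndex (d 0) (d 1))) := by
  have hXY := pow_mul_pow_eq_mul_pow_min (π (X 0)) (π (X 1)) (d 0) (d 1)
  rw [← map_mul, mk_X_zero_mul_X_one, ← mk_basisPoly] at hXY
  rw [monomial_eq, Finsupp.prod_fintype _ _ (fun _ => pow_zero _), Fin.prod_univ_three]
  simp only [map_mul, map_pow] at hXY ⊢
  rw [hXY]
  ring

variable {f e k}

theorem map_mk_eq_mk_aeval (ψ : Base A k →+* MvPolynomial (Fin 3) A ⧸ stmt8Icup A f e k)
    (hψC : ∀ a : A, ψ (Ideal.Quotient.mk _ (Polynomial.C a)) = π (C a))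
    (hψX : ψ (Ideal.Quotient.mk _ Polynomial.X) = π (X 2)) (q : Polynomial A) :
    ψ (Ideal.Quotient.mk _ q) = π (Polynomial.aeval (X 2) q) := by
  have : ψ.comp (Ideal.Quotient.mk _) = (π).comp (Polynomial.aeval (X 2)).toRingHom :=
    Polynomial.ringHom_ext (fun a => by simpa using hψC a) (by simpa using hψX)
  exact congr($this q)

variable (ψ : Base A k →+* MvPolynomial (Fin 3) A ⧸ stmt8Icup A f e k)

noncomputable def basisCombination (c : (ℕ ⊕ ℕ) →₀ Base A k) :
    MvPolynomial (Fin 3) A ⧸ stmt8Icup A f e k :=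
  c.sum fun s b => ψ b * π (basisPoly s)

theorem basisCombination_add (c c' : (ℕ ⊕ ℕ) →₀ Base A k) :
    basisCombination ψ (c + c') = basisCombination ψ c + basisCombination ψ c' :=
  Finsupp.sum_add_index' (fun _ => by simp) (fun _ _ _ => by rw [map_add, add_mul])

theorem basisCombination_single (s : ℕ ⊕ ℕ) (b : Base A k) :
    basisCombination ψ (Finsupp.single s b) = ψ b * π (basisPoly s) :=
  Finsupp.sum_single_index (by simp)

theorem mk_eq_basisCombination_normalForm
    (hψ : ∀ q, ψ (Ideal.Quotient.mk _ q) = π (Polynomial.aeval (X 2) q))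
    (p : MvPolynomial (Fin 3) A) :
    π p = basisCombination ψ (normalForm f e k p) := by
  induction p using MvPolynomial.induction_on' with
  | add p q hp hq => rw [map_add, hp, hq, map_add, basisCombination_add]
  | monomial d a =>
    have hcoeff : a • ((f • t A k ^ e) ^ min (d 0) (d 1) * t A k ^ d 2) =
        Ideal.Quotient.mk _ (Polynomial.C a * (Polynomial.C f * Polynomial.X ^ e) ^ min (d 0) (d 1)
          * Polynomial.X ^ d 2) := by
      rw [smul_eq_mk_C_mul, smul_eq_mk_C_mul, t]
      simp only [map_mul, map_pow]
      ring
    rw [normalForm_monomial, monomialNormalForm, Finsupp.smul_single, basisCombination_single,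
      hcoeff, hψ, mk_monomial]
    simp

theorem mk_liftPoly (hψ : ∀ q, ψ (Ideal.Quotient.mk _ q) = π (Polynomial.aeval (X 2) q))
    (c : (ℕ ⊕ ℕ) →₀ Base A k) : π (liftPoly k c) = basisCombination ψ c := by
  simp only [liftPoly, basisCombination, map_finsuppSum, map_mul, ← hψ, Ideal.Quotient.mk_out,
    mul_comm]

end RCup

theorem stmt8_general (A : Type*) [CommRing A] (f : A) (e k : ℕ)
    (ψ : (Polynomial A ⧸ Ideal.span {(Polynomial.X : Polynomial A) ^ (k + 1)}) →+*
      (MvPolynomial (Fin 3) A ⧸ stmt8Icup A f e k))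
    (hψC : ∀ a : A,
      ψ (Ideal.Quotient.mk (Ideal.span {(Polynomial.X : Polynomial A) ^ (k + 1)})
          (Polynomial.C a)) =
        Ideal.Quotient.mk (stmt8Icup A f e k) (C a))
    (hψX : ψ (Ideal.Quotient.mk (Ideal.span {(Polynomial.X : Polynomial A) ^ (k + 1)})
          Polynomial.X) =
        Ideal.Quotient.mk (stmt8Icup A f e k) (X 2)) :
    ∀ r : MvPolynomial (Fin 3) A ⧸ stmt8Icup A f e k,
      ∃! c : (ℕ ⊕ ℕ) →₀ (Polynomial A ⧸ Ideal.span {(Polynomial.X : Polynomial A) ^ (k + 1)}),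
        r = c.sum (fun s a => ψ a *
          Sum.elim
            (fun i => Ideal.Quotient.mk (stmt8Icup A f e k)
              ((X 0 : MvPolynomial (Fin 3) A) ^ i))
            (fun j => Ideal.Quotient.mk (stmt8Icup A f e k)
              ((X 1 : MvPolynomial (Fin 3) A) ^ (j + 1))) s) := by
  have hψ := RCup.map_mk_eq_mk_aeval ψ hψC hψX
  have hbasis : Sum.elim (fun i => Ideal.Quotient.mk (stmt8Icup A f e k) (X 0 ^ i))
      (fun j => Ideal.Quotient.mk (stmt8Icup A f e k) (X 1 ^ (j + 1))) =
      fun s => Ideal.Quotient.mk (stmt8Icup A f e k) (RCup.basisPoly s) :=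
    (Sum.comp_elim _ _ _).symm
  intro r
  obtain ⟨p, rfl⟩ := Ideal.Quotient.mk_surjective r
  simp only [hbasis]
  refine ⟨RCup.normalForm f e k p, RCup.mk_eq_basisCombination_normalForm ψ hψ p,
    fun c hc => ?_⟩
  have hlift : Ideal.Quotient.mk (stmt8Icup A f e k) (RCup.liftPoly k c) = Ideal.Quotient.mk _ p :=
    (RCup.mk_liftPoly ψ hψ c).trans hc.symm
  rw [← RCup.normalForm_liftPoly f e k c, RCup.normalForm_eq_of_mk_eq f e k hlift]

/-- `R∪ = A[X,Y,t]/(XY − f·t^e, t^{k+1})` is a free module over `A[t]/(t^{k+1})`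
(acting through `ψ`) with basis the images of the monomials `X^i` (`i ≥ 0`) and
`Y^j` (`j ≥ 1`): every element has a unique finitely supported representation. -/
theorem stmt8 (A : Type*) [CommRing A] (f : A) (e k : ℕ) (he : 1 ≤ e)
    (ψ : (Polynomial A ⧸ Ideal.span {(Polynomial.X : Polynomial A) ^ (k + 1)}) →+*
      (MvPolynomial (Fin 3) A ⧸ stmt8Icup A f e k))
    (hψC : ∀ a : A,
      ψ (Ideal.Quotient.mk (Ideal.span {(Polynomial.X : Polynomial A) ^ (k + 1)})
          (Polynomial.C a)) =
        Ideal.Quotient.mk (stmt8Icup A f e k) (C a))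
    (hψX : ψ (Ideal.Quotient.mk (Ideal.span {(Polynomial.X : Polynomial A) ^ (k + 1)})
          Polynomial.X) =
        Ideal.Quotient.mk (stmt8Icup A f e k) (X 2)) :
    ∀ r : MvPolynomial (Fin 3) A ⧸ stmt8Icup A f e k,
      ∃! c : (ℕ ⊕ ℕ) →₀ (Polynomial A ⧸ Ideal.span {(Polynomial.X : Polynomial A) ^ (k + 1)}),
        r = c.sum (fun s a => ψ a *
          Sum.elim
            (fun i => Ideal.Quotient.mk (stmt8Icup A f e k)
              ((X 0 : MvPolynomial (Fin 3) A) ^ i))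
            (fun j => Ideal.Quotient.mk (stmt8Icup A f e k)
              ((X 1 : MvPolynomial (Fin 3) A) ^ (j + 1))) s) :=
  stmt8_general A f e k ψ hψC hψX
end
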